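/- The Hilbert flying saucer X (with its induced length metric) admits no geodesic ray from the origin: there is no path γ : [0,∞) → X with γ(0) = 0 that is an isometric embedding with respect to the length metric of X. Hence the ideal boundary of X is empty. -/

import Mathlib

/-- `ℓ²`, the Hilbert space of square-summable real sequences. -/
noncomputable abbrev ell2 : Type := lp (fun _ : ℕ => ℝ) 2

/-- The disk `Y_i` (here indexed from `0`, so `saucerY i` is the paper's `Y_{i+1}`):
elements of norm at most `i+1` whose first `i` coordinates vanish. -/
def saucerY (i : ℕ) : Set ell2 :=
  {x : ell2 | ‖x‖ ≤ (i : ℝ) + 1 ∧ ∀ j < i, x j = 0}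

/-- The Hilbert flying saucer `X = ⋃ᵢ Yᵢ ⊆ ℓ²`. -/
def saucer : Set ell2 := ⋃ i : ℕ, saucerY i

/-- The induced length (inner) metric on a subset `X` of a normed space: the infimum of
lengths (total variations) of continuous paths in `X` joining `u` to `v`. -/
noncomputable def lengthDist {E : Type*} [NormedAddCommGroup E] [NormedSpace ℝ E]
    (X : Set E) (u v : E) : ENNReal :=
  ⨅ (γ : ℝ → E) (_ : ContinuousOn γ (Set.Icc 0 1)) (_ : γ 0 = u) (_ : γ 1 = v)
    (_ : Set.MapsTo γ (Set.Icc 0 1) X), eVariationOn γ (Set.Icc 0 1)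

/-! Since `X` is star-shaped about `0`, its length distance from `0` is the norm, so a geodesic
ray `γ` from `0` has `‖γ t‖ = t` and is `1`-Lipschitz into `ℓ²`. By strict convexity of `ℓ²`,
`γ 1` then lies on the segment `[0, γ t]` for every `t ≥ 1`. But `‖γ t‖ = t` forces `γ t` into a
disk `Y_i` with `i ≥ t - 1`, so its first coordinates vanish; letting `t → ∞`, every coordinate
of `γ 1` vanishes, contradicting `‖γ 1‖ = 1`. -/

open Set

section LengthDist

variable {E : Type*} [NormedAddCommGroup E] [NormedSpace ℝ E]

theorem edist_le_lengthDist (X : Set E) (u v : E) : edist u v ≤ lengthDist X u v := by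
  refine le_iInf fun γ => le_iInf fun _ => le_iInf fun h0 => le_iInf fun h1 => le_iInf fun _ => ?_
  simpa [h0, h1] using eVariationOn.edist_le γ (s := Icc (0 : ℝ) 1) (x := 0) (y := 1)
    (by simp) (by simp)

theorem lengthDist_le_edist_of_segment_subset {X : Set E} {u v : E} (h : segment ℝ u v ⊆ X) :
    lengthDist X u v ≤ edist u v := by
  have hmaps : MapsTo (AffineMap.lineMap u v : ℝ → E) (Icc 0 1) X := by
    intro r hr
    exact h ((segment_eq_image_lineMap ℝ u v).symm ▸ mem_image_of_mem _ hr)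
  have hvar : eVariationOn (AffineMap.lineMap u v : ℝ → E) (Icc 0 1) ≤ edist u v := by
    have := (lipschitzWith_lineMap (𝕜 := ℝ) u v).lipschitzOnWith.comp_eVariationOn_le
        (g := id) (s := Icc (0 : ℝ) 1) (mapsTo_univ _ _)
    rwa [eVariationOn_id_Icc, sub_zero, ENNReal.ofReal_one, mul_one, ← edist_nndist,
      Function.comp_id] at this
  exact iInf_le_of_le _ <| iInf_le_of_le (lipschitzWith_lineMap u v).continuous.continuousOn <|
    iInf_le_of_le (by simp) <| iInf_le_of_le (by simp) <| iInf_le_of_le hmaps hvar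

theorem StarConvex.lengthDist_eq_edist {X : Set E} {u v : E} (hX : StarConvex ℝ u X)
    (hv : v ∈ X) : lengthDist X u v = edist u v :=
  (lengthDist_le_edist_of_segment_subset (hX.segment_subset hv)).antisymm
    (edist_le_lengthDist X u v)

end LengthDist

theorem mem_segment_zero_of_norm_add_norm_sub_le {E : Type*} [NormedAddCommGroup E]
    [NormedSpace ℝ E] [StrictConvexSpace ℝ E] {x y : E} (h : ‖x‖ + ‖y - x‖ ≤ ‖y‖) :
    x ∈ segment ℝ 0 y := by
  rw [mem_segment_iff_sameRay, sub_zero, sameRay_iff_norm_add, add_sub_cancel]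
  exact h.antisymm' (by simpa using norm_add_le x (y - x))

theorem starConvex_saucer : StarConvex ℝ 0 saucer := by
  rw [starConvex_zero_iff]
  rintro x ⟨_, ⟨i, rfl⟩, hnorm, hzero⟩ a ha₀ ha₁
  refine mem_iUnion.2 ⟨i, ?_, fun j hj => by simp [hzero j hj]⟩
  rw [norm_smul, Real.norm_of_nonneg ha₀]
  exact (mul_le_of_le_one_left (norm_nonneg x) ha₁).trans hnorm

theorem saucer_apply_eq_zero_of_lt_norm {x : ell2} (hx : x ∈ saucer) {j : ℕ}
    (hj : (j : ℝ) + 1 < ‖x‖) : x j = 0 := by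
  obtain ⟨_, ⟨i, rfl⟩, hnorm, hzero⟩ := hx
  exact hzero j (by exact_mod_cast (add_lt_add_iff_right 1).1 (hj.trans_le hnorm))

/-- The Hilbert flying saucer admits no geodesic ray from the origin: there is no
`γ : [0,∞) → X` with `γ 0 = 0` which is an isometric embedding for the induced length
metric. Hence the ideal boundary of `X` is empty. -/
theorem stmt_12 :
    ¬∃ γ : ℝ → ell2,
      (∀ t : ℝ, 0 ≤ t → γ t ∈ saucer) ∧ γ 0 = 0 ∧
      ∀ s t : ℝ, 0 ≤ s → 0 ≤ t →
        lengthDist saucer (γ s) (γ t) = ENNReal.ofReal |s - t| := by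
  rintro ⟨γ, hmem, h0, hiso⟩
  have hdist : ∀ s t, 0 ≤ s → 0 ≤ t → ‖γ s - γ t‖ ≤ |s - t| := fun s t hs ht => by
    have := edist_le_lengthDist saucer (γ s) (γ t)
    rwa [hiso s t hs ht, edist_dist, ENNReal.ofReal_le_ofReal_iff (abs_nonneg _),
      dist_eq_norm] at this
  have hnorm : ∀ t, 0 ≤ t → ‖γ t‖ = t := fun t ht => by
    have := starConvex_saucer.lengthDist_eq_edist (hmem t ht)
    rwa [← h0, hiso 0 t le_rfl ht, edist_dist, h0, dist_zero_left, eq_comm,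
      ENNReal.ofReal_eq_ofReal_iff (norm_nonneg _) (abs_nonneg _), zero_sub, abs_neg,
      abs_of_nonneg ht] at this
  have hseg : ∀ t : ℝ, 1 ≤ t → γ 1 ∈ segment ℝ 0 (γ t) := fun t ht => by
    refine mem_segment_zero_of_norm_add_norm_sub_le ?_
    have h1t := hdist t 1 (by linarith) zero_le_one
    rw [abs_of_nonneg (sub_nonneg.2 ht)] at h1t
    rw [hnorm 1 zero_le_one, hnorm t (by linarith)]
    linarith
  have hcoord : ∀ j : ℕ, γ 1 j = 0 := fun j => by
    obtain ⟨a, b, -, -, -, hab⟩ := hseg (j + 2) (by linarith [j.cast_nonneg (α := ℝ)])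
    have hzero := saucer_apply_eq_zero_of_lt_norm (hmem (j + 2) (by linarith)) (j := j)
      (by rw [hnorm _ (by linarith)]; linarith)
    rw [← hab]
    simp [hzero]
  have h1 := hnorm 1 zero_le_one
  rw [show γ 1 = 0 from lp.ext (funext hcoord), norm_zero] at h1
  exact zero_ne_one h1
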